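/- arXiv:0910.5563 — 3 statements merged into one kernel-verified Lean document; each statement's English description precedes it below -/
import Mathlib

section
/- Mehler's formula: for real (or complex) x, y and complex s with |s| < 1, Σ_{n≥0} (s/2)^n / n! · H_n(x)·H_n(y) = (1−s²)^{−1/2} · exp((2xys − (x²+y²)s²)/(1−s²)). -/
/-!
Two representations of `H_n` do the work. Taylor expansion of `t ↦ e^{x²} e^{-(x-t)²}` gives
the generating function `∑ H_n(x) tⁿ/n! = e^{2xt - t²}`, and differentiating the Fourier
representation `e^{-y²} = π^{-1/2} ∫ e^{-u² + 2iyu} du` gives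
`H_n(y) = (-1)ⁿ e^{y²} π^{-1/2} ∫ (2iu)ⁿ e^{-u² + 2iyu} du`.
Inserting the second into Mehler's sum and summing under the integral with the first at
`t = -isu` leaves the Gaussian integral `∫ exp((s² - 1)u² + 2i(y - xs)u) du`, which is evaluated
in closed form.
The exchange of sum and integral is dominated convergence, fed by Cauchy's estimate for `H_n(x)`.
-/

open scoped Nat

/-- Physicists' Hermite polynomial `H_n(x) = (−1)^n e^{x²} (d/dx)^n e^{−x²}`,
extended to a complex argument. -/
noncomputable def Hphys (n : ℕ) (x : ℂ) : ℂ :=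
  (-1 : ℂ) ^ n * Complex.exp (x ^ 2) *
    iteratedDeriv n (fun y : ℂ => Complex.exp (-y ^ 2)) x

open Complex MeasureTheory Metric
open scoped Real

theorem Hphys_eq_iteratedDeriv (n : ℕ) (x : ℂ) :
    Hphys n x = iteratedDeriv n (fun t => cexp (2 * x * t - t ^ 2)) 0 := by
  have hsplit :
      (fun t => cexp (2 * x * t - t ^ 2)) = fun t => cexp (x ^ 2) * cexp (-(x - t) ^ 2) := by
    ext t; rw [← Complex.exp_add]; ring_nf
  have hshift := congrFun (iteratedDeriv_comp_const_sub n (fun z => cexp (-z ^ 2)) x) 0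
  rw [hsplit, iteratedDeriv_const_mul_field, hshift, Hphys, sub_zero, smul_eq_mul]
  ring

theorem hasSum_Hphys_mul_pow_div_factorial (x t : ℂ) :
    HasSum (fun n => Hphys n x * t ^ n / n !) (cexp (2 * x * t - t ^ 2)) := by
  have h := hasSum_taylorSeries_of_entire (f := fun t => cexp (2 * x * t - t ^ 2)) (by fun_prop) 0 t
  simp only [sub_zero, smul_eq_mul, ← Hphys_eq_iteratedDeriv] at h
  rw [show (fun n => Hphys n x * t ^ n / n !) = fun n => (n ! : ℂ)⁻¹ * (t ^ n * Hphys n x) by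
    ext n; ring]
  exact h

theorem norm_Hphys_le (n : ℕ) (x : ℂ) {R : ℝ} (hR : 0 < R) :
    ‖Hphys n x‖ ≤ n ! * Real.exp (2 * ‖x‖ * R + R ^ 2) / R ^ n := by
  rw [Hphys_eq_iteratedDeriv]
  refine norm_iteratedDeriv_le_of_forall_mem_sphere_norm_le n hR
    (Differentiable.diffContOnCl (by fun_prop)) fun t ht => ?_
  rw [mem_sphere_zero_iff_norm] at ht
  rw [Complex.norm_exp]
  gcongr
  calc (2 * x * t - t ^ 2).re ≤ ‖2 * x * t - t ^ 2‖ := re_le_norm _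
    _ ≤ ‖2 * x * t‖ + ‖t ^ 2‖ := norm_sub_le _ _
    _ = 2 * ‖x‖ * R + R ^ 2 := by simp [ht]

theorem integrable_exp_neg_mul_sq_add_mul_abs {a : ℝ} (ha : 0 < a) (b : ℝ) :
    Integrable fun u : ℝ => Real.exp (-a * u ^ 2 + b * |u|) := by
  refine ((integrable_exp_neg_mul_sq (half_pos ha)).const_mul (Real.exp (b ^ 2 / (2 * a)))).mono'
    (by fun_prop) (ae_of_all _ fun u => ?_)
  rw [Real.norm_of_nonneg (Real.exp_nonneg _), ← Real.exp_add, Real.exp_le_exp, ← sq_abs u]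
  have : b * |u| ≤ b ^ 2 / (2 * a) + a / 2 * |u| ^ 2 := by
    rw [div_add' _ _ _ (by positivity), le_div_iff₀ (by positivity)]
    nlinarith [sq_nonneg (a * |u| - b)]
  linarith

theorem ofReal_mul_cpow {r : ℝ} (hr : 0 < r) {w : ℂ} (hw : w ≠ 0) (a : ℂ) :
    ((r : ℂ) * w) ^ a = (r : ℂ) ^ a * w ^ a := by
  rw [cpow_def_of_ne_zero (mul_ne_zero (ofReal_ne_zero.2 hr.ne') hw), log_ofReal_mul hr hw,
    add_mul, Complex.exp_add, ofReal_log hr.le, ← cpow_def_of_ne_zero (ofReal_ne_zero.2 hr.ne'),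
    ← cpow_def_of_ne_zero hw]

theorem ofReal_cpow_one_half {r : ℝ} (hr : 0 ≤ r) : (r : ℂ) ^ (1 / 2 : ℂ) = √r := by
  rw [Real.sqrt_eq_rpow, ofReal_cpow hr]
  norm_num

theorem pi_div_cpow_one_half {w : ℂ} (hw : 0 < w.re) :
    ((π : ℂ) / w) ^ (1 / 2 : ℂ) = √π * w ^ (-(1 / 2) : ℂ) := by
  have hw0 : w ≠ 0 := fun h => by simp [h] at hw
  have harg : w.arg ≠ π := fun h => by linarith [(arg_eq_pi_iff.1 h).1]
  rw [div_eq_mul_inv, ofReal_mul_cpow Real.pi_pos (inv_ne_zero hw0),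
    ofReal_cpow_one_half Real.pi_pos.le, inv_cpow _ _ harg, ← cpow_neg]

/-- `e^{-z²} = π^{-1/2} ∫ e^{-u² + 2izu} du`, and differentiating `n` times in `z` under the
integral brings down the factor `(2iu)^n`. -/
noncomputable def hermiteKernel (n : ℕ) (z : ℂ) (u : ℝ) : ℂ :=
  (2 * I * u) ^ n * cexp (-(u : ℂ) ^ 2 + 2 * I * z * u)

theorem continuous_hermiteKernel (n : ℕ) (z : ℂ) : Continuous (hermiteKernel n z) := by
  unfold hermiteKernel; fun_prop

theorem norm_hermiteKernel (n : ℕ) (z : ℂ) (u : ℝ) :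
    ‖hermiteKernel n z u‖ = (2 * |u|) ^ n * Real.exp (-u ^ 2 - 2 * z.im * u) := by
  have hre : (-(u : ℂ) ^ 2 + 2 * I * z * u).re = -u ^ 2 - 2 * z.im * u := by
    simp only [pow_two, add_re, neg_re, mul_re, ofReal_re, ofReal_im, mul_zero, sub_zero, re_ofNat,
      I_re, im_ofNat, I_im, mul_one, sub_self, zero_mul, mul_im, add_zero, zero_sub, neg_mul,
      zero_add]
    ring
  simp [hermiteKernel, Complex.norm_exp, hre]

theorem norm_hermiteKernel_le (n : ℕ) {z : ℂ} {c : ℝ} (hz : |z.im| ≤ c) (u : ℝ) :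
    ‖hermiteKernel n z u‖ ≤ 2 ^ n * n ! * Real.exp (-1 * u ^ 2 + (2 * c + 1) * |u|) := by
  have hpow : |u| ^ n ≤ n ! * Real.exp |u| := by
    have := Real.pow_div_factorial_le_exp _ (abs_nonneg u) n
    rwa [div_le_iff₀ (by positivity), mul_comm] at this
  have hlin : -2 * z.im * u ≤ 2 * c * |u| := by
    have := neg_abs_le (z.im * u)
    rw [abs_mul] at this
    nlinarith [abs_nonneg u]
  calc ‖hermiteKernel n z u‖ = 2 ^ n * (|u| ^ n * Real.exp (-u ^ 2 - 2 * z.im * u)) := by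
        rw [norm_hermiteKernel, mul_pow, mul_assoc (2 ^ n : ℝ)]
    _ ≤ 2 ^ n * (n ! * Real.exp |u| * Real.exp (-u ^ 2 - 2 * z.im * u)) := by gcongr
    _ = 2 ^ n * n ! * Real.exp (|u| + (-u ^ 2 - 2 * z.im * u)) := by rw [Real.exp_add]; ring
    _ ≤ 2 ^ n * n ! * Real.exp (-1 * u ^ 2 + (2 * c + 1) * |u|) := by
        gcongr 2 ^ n * n ! * Real.exp ?_
        linarith

theorem integrable_hermiteKernel (n : ℕ) (z : ℂ) : Integrable (hermiteKernel n z) :=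
  (((integrable_exp_neg_mul_sq_add_mul_abs one_pos (2 * |z.im| + 1)).const_mul
    (2 ^ n * n !))).mono' (continuous_hermiteKernel n z).aestronglyMeasurable
    (ae_of_all _ (norm_hermiteKernel_le n le_rfl))

theorem hasDerivAt_integral_hermiteKernel (n : ℕ) (z : ℂ) :
    HasDerivAt (fun w => ∫ u, hermiteKernel n w u) (∫ u, hermiteKernel (n + 1) z u) z := by
  have hball : ∀ w ∈ ball z 1, |w.im| ≤ |z.im| + 1 := fun w hw => by
    have : |w.im - z.im| ≤ 1 := by
      simpa [← Complex.sub_im] using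
        (abs_im_le_norm (w - z)).trans (mem_ball_iff_norm.1 hw).le
    linarith [abs_sub_abs_le_abs_sub w.im z.im]
  refine (hasDerivAt_integral_of_dominated_loc_of_deriv_le (ball_mem_nhds z one_pos)
    (.of_forall fun w => (continuous_hermiteKernel n w).aestronglyMeasurable)
    (integrable_hermiteKernel n z) (continuous_hermiteKernel (n + 1) z).aestronglyMeasurable
    (ae_of_all _ fun u w hw => norm_hermiteKernel_le (n + 1) (hball w hw) u)
    ((integrable_exp_neg_mul_sq_add_mul_abs one_pos _).const_mul _)
    (ae_of_all _ fun u w _ => ?_)).2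
  have hlin : HasDerivAt (fun w : ℂ => -(u : ℂ) ^ 2 + 2 * I * w * u) (2 * I * u) w := by
    simpa using
      ((hasDerivAt_id w).const_mul (2 * I) |>.mul_const (u : ℂ)).const_add (-(u : ℂ) ^ 2)
  exact (hlin.cexp.const_mul ((2 * I * u) ^ n)).congr_deriv (by simp only [hermiteKernel]; ring)

theorem integral_hermiteKernel_zero (z : ℂ) :
    ∫ u, hermiteKernel 0 z u = √π * cexp (-z ^ 2) := by
  have h := integral_cexp_quadratic (b := -1) (by simp) (2 * I * z) 0
  rw [neg_neg, div_one, ofReal_cpow_one_half Real.pi_pos.le] at h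
  simp only [hermiteKernel, pow_zero, one_mul]
  convert h using 3
  · congr 1; ring
  · rw [mul_pow, mul_pow, I_sq]
    ring

theorem iteratedDeriv_cexp_neg_sq (n : ℕ) :
    iteratedDeriv n (fun z => cexp (-z ^ 2)) =
      fun z => (√π : ℂ)⁻¹ * ∫ u, hermiteKernel n z u := by
  have hpi : (√π : ℂ) ≠ 0 := ofReal_ne_zero.2 (Real.sqrt_pos.2 Real.pi_pos).ne'
  induction n with
  | zero => ext z; rw [iteratedDeriv_zero, integral_hermiteKernel_zero, inv_mul_cancel_left₀ hpi]
  | succ n ih =>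
    ext z
    rw [iteratedDeriv_succ, ih]
    exact ((hasDerivAt_integral_hermiteKernel n z).const_mul _).deriv

theorem Hphys_eq_integral (n : ℕ) (z : ℂ) :
    Hphys n z = (-1) ^ n * cexp (z ^ 2) / √π * ∫ u, hermiteKernel n z u := by
  rw [Hphys, iteratedDeriv_cexp_neg_sq]
  ring

noncomputable def mehlerSummand (x y s : ℂ) (n : ℕ) (u : ℝ) : ℂ :=
  (-s / 2) ^ n / n ! * Hphys n x * hermiteKernel n y u

-- Cauchy's estimate for `Hphys n x` on the radius `R = ρ|u| + 1` leaves a Gaussian in `u`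
-- as long as `ρ < 1`, and a geometric factor in `n` as long as `‖s‖ < ρ`.
theorem norm_mehlerSummand_le (x y s : ℂ) {ρ : ℝ} (hρ : 0 < ρ) (n : ℕ) (u : ℝ) :
    ‖mehlerSummand x y s n u‖ ≤ (‖s‖ / ρ) ^ n *
      (Real.exp (2 * ‖x‖ + 1) *
        Real.exp (-(1 - ρ ^ 2) * u ^ 2 + 2 * (‖x‖ * ρ + ρ + ‖y‖) * |u|)) := by
  set R := ρ * |u| + 1
  have hR : 0 < R := by positivity
  have hratio : ‖s‖ * |u| / R ≤ ‖s‖ / ρ := by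
    rw [div_le_div_iff₀ hR hρ]
    nlinarith [norm_nonneg s]
  have hexp : 2 * ‖x‖ * R + R ^ 2 + (-u ^ 2 - 2 * y.im * u) ≤
      2 * ‖x‖ + 1 + (-(1 - ρ ^ 2) * u ^ 2 + 2 * (‖x‖ * ρ + ρ + ‖y‖) * |u|) := by
    have him : -(y.im * u) ≤ ‖y‖ * |u| := by
      calc -(y.im * u) ≤ |y.im| * |u| := (neg_le_abs _).trans_eq (abs_mul _ _)
        _ ≤ ‖y‖ * |u| := by gcongr; exact abs_im_le_norm y
    have : u ^ 2 = |u| ^ 2 := (sq_abs u).symm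
    nlinarith
  calc ‖mehlerSummand x y s n u‖
      = (‖s‖ / 2) ^ n / n ! * ‖Hphys n x‖ *
          ((2 * |u|) ^ n * Real.exp (-u ^ 2 - 2 * y.im * u)) := by
        simp [mehlerSummand, norm_hermiteKernel]
    _ ≤ (‖s‖ / 2) ^ n / n ! * (n ! * Real.exp (2 * ‖x‖ * R + R ^ 2) / R ^ n) *
          ((2 * |u|) ^ n * Real.exp (-u ^ 2 - 2 * y.im * u)) := by
        gcongr
        exact norm_Hphys_le n x hR
    _ = (‖s‖ * |u| / R) ^ n * Real.exp (2 * ‖x‖ * R + R ^ 2 + (-u ^ 2 - 2 * y.im * u)) := by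
        rw [Real.exp_add (2 * ‖x‖ * R + R ^ 2), div_pow, div_pow, mul_pow, mul_pow]
        field_simp
    _ ≤ (‖s‖ / ρ) ^ n * Real.exp (2 * ‖x‖ + 1 +
          (-(1 - ρ ^ 2) * u ^ 2 + 2 * (‖x‖ * ρ + ρ + ‖y‖) * |u|)) := by
        gcongr
    _ = _ := by rw [Real.exp_add]

-- The `+ 0` is the constant term in the shape of `integral_cexp_quadratic`.
theorem hasSum_integral_mehlerSummand (x y s : ℂ) (hs : ‖s‖ < 1) :
    HasSum (fun n => ∫ u, mehlerSummand x y s n u)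
      (∫ u : ℝ, cexp ((s ^ 2 - 1) * u ^ 2 + 2 * I * (y - x * s) * u + 0)) := by
  obtain ⟨ρ, hsρ, hρ1⟩ := exists_between hs
  have hρ : 0 < ρ := (norm_nonneg s).trans_lt hsρ
  have hq : ‖s‖ / ρ < 1 := (div_lt_one hρ).2 hsρ
  refine hasSum_integral_of_dominated_convergence
    (fun n u => (‖s‖ / ρ) ^ n * (Real.exp (2 * ‖x‖ + 1) *
      Real.exp (-(1 - ρ ^ 2) * u ^ 2 + 2 * (‖x‖ * ρ + ρ + ‖y‖) * |u|)))
    (fun n => (continuous_hermiteKernel n y).aestronglyMeasurable.const_mul _)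
    (fun n => ae_of_all _ (norm_mehlerSummand_le x y s hρ n))
    (ae_of_all _ fun u => (summable_geometric_of_lt_one (by positivity) hq).mul_right _)
    ?_ (ae_of_all _ fun u => ?_)
  · simp_rw [tsum_mul_right]
    exact ((integrable_exp_neg_mul_sq_add_mul_abs (by nlinarith) _).const_mul _).const_mul _
  · have hterm (n : ℕ) : mehlerSummand x y s n u =
        Hphys n x * (-(I * s * u)) ^ n / n ! * cexp (-(u : ℂ) ^ 2 + 2 * I * y * u) := by
      rw [mehlerSummand, hermiteKernel,
        show (-(I * s * u)) ^ n = (-s / 2) ^ n * (2 * I * u) ^ n by rw [← mul_pow]; ring_nf]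
      ring
    have hsum : (s ^ 2 - 1) * u ^ 2 + 2 * I * (y - x * s) * u + 0 =
        2 * x * (-(I * s * u)) - (-(I * s * u)) ^ 2 + (-(u : ℂ) ^ 2 + 2 * I * y * u) := by
      ring_nf
      rw [I_sq]
      ring
    rw [hsum, Complex.exp_add]
    simp_rw [hterm]
    exact (hasSum_Hphys_mul_pow_div_factorial x (-(I * s * u))).mul_right _

/-- Mehler's formula; `(1−s²)^{−1/2}` is the principal branch complex power. -/
theorem stmt_3 (x y s : ℂ) (hs : ‖s‖ < 1) :
    ∑' n : ℕ, (s / 2) ^ n / (n ! : ℂ) * (Hphys n x * Hphys n y) =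
      (1 - s ^ 2) ^ (-(1 / 2) : ℂ) *
        Complex.exp ((2 * x * y * s - (x ^ 2 + y ^ 2) * s ^ 2) / (1 - s ^ 2)) := by
  have hs2 : (s ^ 2).re < 1 :=
    (re_le_norm _).trans_lt (by rw [norm_pow]; nlinarith [norm_nonneg s])
  have hw : 0 < (1 - s ^ 2).re := by simpa using hs2
  have hw0 : 1 - s ^ 2 ≠ 0 := fun h => by simp [h] at hw
  have hw0' : s ^ 2 - 1 ≠ 0 := by rwa [← neg_ne_zero, neg_sub]
  have hpi : (√π : ℂ) ≠ 0 := ofReal_ne_zero.2 (Real.sqrt_pos.2 Real.pi_pos).ne'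
  have hterm (n : ℕ) : (s / 2) ^ n / n ! * (Hphys n x * Hphys n y) =
      cexp (y ^ 2) / √π * ∫ u, mehlerSummand x y s n u := by
    simp only [mehlerSummand]
    rw [integral_const_mul, Hphys_eq_integral n y, neg_div, neg_pow (s / 2)]
    ring
  have hexp : y ^ 2 + (0 - (2 * I * (y - x * s)) ^ 2 / (4 * (s ^ 2 - 1))) =
      (2 * x * y * s - (x ^ 2 + y ^ 2) * s ^ 2) / (1 - s ^ 2) := by
    rw [mul_pow, mul_pow, I_sq]
    field_simp
    ring
  rw [tsum_congr hterm, tsum_mul_left, (hasSum_integral_mehlerSummand x y s hs).tsum_eq,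
    integral_cexp_quadratic (by simpa using hs2), neg_sub, pi_div_cpow_one_half hw, ← hexp,
    Complex.exp_add]
  field_simp
end

section
/- For every complex w with |w| < 1, the Gaussian integral ∫_{ℂ} exp(−|y|² − (1/2)(y²·w̄ + ȳ²·w)) d²y equals π·(1−|w|²)^{−1/2}, where d²y is Lebesgue measure on ℂ ≅ ℝ². -/
open ComplexConjugate

/-!
Write `w = c² ‖w‖` with `c` on the unit circle. Since `y² w̄ + ȳ² w = 2 Re (y² w̄)`, the rotation
`y = c z`, which preserves Lebesgue measure, turns the exponent into the diagonal form
`-(1 + ‖w‖) x² - (1 - ‖w‖) t²` for `z = x + i t`. The integral then factors into two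
one-dimensional Gaussian integrals, `√(π / (1 + ‖w‖)) · √(π / (1 - ‖w‖)) = π (1 - ‖w‖²)^(-1/2)`.
-/

open MeasureTheory Complex Real

theorem integral_comp_circle_mul {E : Type*} [NormedAddCommGroup E] [NormedSpace ℝ E]
    (c : Circle) (f : ℂ → E) : ∫ z, f (c * z) = ∫ z, f z :=
  (rotation c).measurePreserving.integral_comp (rotation c).toHomeomorph.measurableEmbedding f

theorem integral_exp_neg_mul_re_sq_add_mul_im_sq (a b : ℝ) :
    ∫ z : ℂ, rexp (-(a * z.re ^ 2 + b * z.im ^ 2)) = √(π / a) * √(π / b) := by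
  rw [← volume_preserving_equiv_real_prod.symm.integral_comp
    measurableEquivRealProd.symm.measurableEmbedding, Measure.volume_eq_prod,
    ← integral_gaussian, ← integral_gaussian, ← integral_prod_mul]
  congr with p
  rw [← Real.exp_add, neg_add]
  simp

theorem Circle.exists_sq_mul_norm_eq (w : ℂ) : ∃ c : Circle, (c : ℂ) ^ 2 * ‖w‖ = w :=
  ⟨Circle.exp (arg w / 2), by
    rw [Circle.coe_exp, ← Complex.exp_nat_mul, mul_comm]
    push_cast
    ring_nf
    exact norm_mul_exp_arg_mul_I w⟩

theorem gaussian_exponent_circle_mul (w z : ℂ) (r : ℝ) (c : Circle) (hc : (c : ℂ) ^ 2 * r = w) :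
    -((‖c * z‖ ^ 2 : ℝ) : ℂ) - (1 / 2) * ((c * z) ^ 2 * conj w + (conj (c * z)) ^ 2 * w) =
      ((-((1 + r) * z.re ^ 2 + (1 - r) * z.im ^ 2) : ℝ) : ℂ) := by
  have hcc : conj (c : ℂ) * c = 1 := by simp [Complex.conj_mul', Circle.norm_coe]
  have hrot : (c * z) ^ 2 * conj w + conj (c * z) ^ 2 * w = r * (z ^ 2 + conj z ^ 2) := by
    rw [← hc]
    simp only [map_mul, map_pow, conj_ofReal]
    linear_combination (r * (z ^ 2 + conj z ^ 2) * (conj (c : ℂ) * c + 1)) * hcc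
  have hsq : z ^ 2 + conj z ^ 2 = 2 * ((z.re ^ 2 - z.im ^ 2 : ℝ) : ℂ) := by
    rw [← map_pow, add_conj]
    simp [sq]
  rw [hrot, hsq, norm_mul, Circle.norm_coe, one_mul, Complex.sq_norm, Complex.normSq_apply]
  push_cast
  ring

theorem sqrt_pi_div_one_add_mul_sqrt_pi_div_one_sub {r : ℝ} (h₁ : -1 < r) (h₂ : r < 1) :
    √(π / (1 + r)) * √(π / (1 - r)) = π * (1 - r ^ 2) ^ (-(1 / 2) : ℝ) := by
  have hr : 0 < 1 - r ^ 2 := by nlinarith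
  rw [← Real.sqrt_mul (div_nonneg pi_pos.le (by linarith)), div_mul_div_comm,
    show (1 + r) * (1 - r) = 1 - r ^ 2 by ring, ← sq, Real.sqrt_div' _ hr.le,
    Real.sqrt_sq pi_pos.le, Real.rpow_neg hr.le, ← Real.sqrt_eq_rpow, div_eq_mul_inv]

/-- Gaussian integral `∫_ℂ exp(−|y|² − (1/2)(y²w̄ + ȳ²w)) d²y = π(1−|w|²)^{−1/2}`
for `|w| < 1`, with respect to Lebesgue measure on `ℂ ≅ ℝ²`. -/
theorem stmt_5 (w : ℂ) (hw : ‖w‖ < 1) :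
    ∫ y : ℂ, Complex.exp (-((‖y‖ ^ 2 : ℝ) : ℂ) - (1 / 2) * (y ^ 2 * conj w + (conj y) ^ 2 * w)) =
      (Real.pi : ℂ) * (((1 - ‖w‖ ^ 2 : ℝ) ^ (-(1 / 2) : ℝ) : ℝ) : ℂ) := by
  obtain ⟨c, hc⟩ := Circle.exists_sq_mul_norm_eq w
  rw [← integral_comp_circle_mul c]
  simp_rw [gaussian_exponent_circle_mul w _ _ c hc, ← ofReal_exp, integral_complex_ofReal,
    integral_exp_neg_mul_re_sq_add_mul_im_sq,
    sqrt_pi_div_one_add_mul_sqrt_pi_div_one_sub (by linarith [norm_nonneg w]) hw, ofReal_mul]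
end

section
/- For a ∈ ℂ, b ∈ ℂ with |a|²−|b|²=1, α ∈ ℂ, z ∈ ℂ and |w| < 1, set κ = ā + w·b̄, γ = z + α − ᾱ·w, z₁ = γ/κ, w₁ = (aw+b)/κ. Then |w₁| < 1 and the map (z,w) ↦ (z₁,w₁) defines a group action of the Jacobi group G^J = SU(1,1) ⋉ ℂ (with composition law (g₁,α₁)∘(g₂,α₂) = (g₁g₂, g₂⁻¹·α₁ + α₂), where g⁻¹·α = ā·α − b·ᾱ) on ℂ × 𝔻. -/
/-!
With `κ(g, w) = ā + w b̄`, the identity `|κ|² − |aw + b|² = (1 − |w|²)(|a|² − |b|²)` shows that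
`|aw + b| < |κ|` on the disk, so `κ ≠ 0` and the disk is preserved. Both `κ` and the numerators
of `Jact` satisfy the cocycle rule `F(g₁g₂, x) = F(g₁, g₂x) · κ(g₂, w)`, so composing the actions
amounts to cancelling the nonzero factor `κ(g₂, w)`.
-/

open ComplexConjugate

/-- An element of the Jacobi group `SU(1,1) ⋉ ℂ` is encoded as `(a, b, α)` with
`|a|² − |b|² = 1`, representing `(((a,b),(b̄,ā)), α)`. Multiplication realizes
`(g₁,α₁)∘(g₂,α₂) = (g₁g₂, g₂⁻¹·α₁ + α₂)` with `g⁻¹·α = ā·α − b·ᾱ`. -/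
def Jmul (h₁ h₂ : ℂ × ℂ × ℂ) : ℂ × ℂ × ℂ :=
  (h₁.1 * h₂.1 + h₁.2.1 * conj h₂.2.1,
   h₁.1 * h₂.2.1 + h₁.2.1 * conj h₂.1,
   conj h₂.1 * h₁.2.2 - h₂.2.1 * conj h₁.2.2 + h₂.2.2)

/-- The action `(z,w) ↦ (γ/κ, (aw+b)/κ)` with `κ = ā + wb̄`, `γ = z + α − ᾱw`. -/
noncomputable def Jact (h : ℂ × ℂ × ℂ) (x : ℂ × ℂ) : ℂ × ℂ :=
  ((x.1 + h.2.2 - conj h.2.2 * x.2) / (conj h.1 + x.2 * conj h.2.1),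
   (h.1 * x.2 + h.2.1) / (conj h.1 + x.2 * conj h.2.1))

open Complex

lemma normSq_conj_add_mul_conj_sub_normSq_mul_add (a b w : ℂ) :
    normSq (conj a + w * conj b) - normSq (a * w + b)
      = (1 - normSq w) * (normSq a - normSq b) := by
  simp only [normSq_apply, add_re, add_im, mul_re, mul_im, conj_re, conj_im]
  ring

lemma norm_mul_add_lt_norm_conj_add_mul_conj {a b w : ℂ} (h : ‖a‖ ^ 2 - ‖b‖ ^ 2 = 1)
    (hw : ‖w‖ < 1) : ‖a * w + b‖ < ‖conj a + w * conj b‖ := by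
  have hw2 : ‖w‖ ^ 2 < 1 := pow_lt_one₀ (norm_nonneg w) hw two_ne_zero
  have key := normSq_conj_add_mul_conj_sub_normSq_mul_add a b w
  simp only [normSq_eq_norm_sq] at key
  rw [h, mul_one] at key
  exact (pow_lt_pow_iff_left₀ (norm_nonneg _) (norm_nonneg _) two_ne_zero).mp (by linarith)

lemma conj_add_mul_conj_ne_zero {a b w : ℂ} (h : ‖a‖ ^ 2 - ‖b‖ ^ 2 = 1) (hw : ‖w‖ < 1) :
    conj a + w * conj b ≠ 0 :=
  norm_pos_iff.mp ((norm_nonneg _).trans_lt (norm_mul_add_lt_norm_conj_add_mul_conj h hw))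

lemma norm_div_conj_add_mul_conj_lt_one {a b w : ℂ} (h : ‖a‖ ^ 2 - ‖b‖ ^ 2 = 1)
    (hw : ‖w‖ < 1) : ‖(a * w + b) / (conj a + w * conj b)‖ < 1 := by
  rw [norm_div, div_lt_one (norm_pos_iff.mpr (conj_add_mul_conj_ne_zero h hw))]
  exact norm_mul_add_lt_norm_conj_add_mul_conj h hw

lemma Jact_Jmul (h₁ h₂ : ℂ × ℂ × ℂ) (x : ℂ × ℂ) (hκ : conj h₂.1 + x.2 * conj h₂.2.1 ≠ 0) :
    Jact (Jmul h₁ h₂) x = Jact h₁ (Jact h₂ x) := by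
  obtain ⟨a₁, b₁, α₁⟩ := h₁
  obtain ⟨a₂, b₂, α₂⟩ := h₂
  obtain ⟨z, w⟩ := x
  set κ := conj a₂ + w * conj b₂
  have hden : conj (a₁ * a₂ + b₁ * conj b₂) + w * conj (a₁ * b₂ + b₁ * conj a₂)
      = (conj a₁ + (a₂ * w + b₂) / κ * conj b₁) * κ := by
    simp only [map_add, map_mul, conj_conj]
    field_simp
    ring
  have hγ : z + (conj a₂ * α₁ - b₂ * conj α₁ + α₂) - conj (conj a₂ * α₁ - b₂ * conj α₁ + α₂) * w
      = ((z + α₂ - conj α₂ * w) / κ + α₁ - conj α₁ * ((a₂ * w + b₂) / κ)) * κ := by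
    simp only [map_add, map_mul, map_sub, conj_conj]
    field_simp
    ring
  have hmob : (a₁ * a₂ + b₁ * conj b₂) * w + (a₁ * b₂ + b₁ * conj a₂)
      = (a₁ * ((a₂ * w + b₂) / κ) + b₁) * κ := by
    field_simp
    ring
  simp only [Jact, Jmul]
  rw [hden, hγ, hmob, mul_div_mul_right _ _ hκ, mul_div_mul_right _ _ hκ]

/-- The map `(z,w) ↦ (z₁,w₁)` preserves `ℂ × 𝔻` and defines a group action of the
Jacobi group on `ℂ × 𝔻`. -/
theorem stmt_14 :
    (∀ (a b α z w : ℂ), ‖a‖ ^ 2 - ‖b‖ ^ 2 = 1 → ‖w‖ < 1 →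
      ‖(Jact (a, b, α) (z, w)).2‖ < 1) ∧
    (∀ x : ℂ × ℂ, Jact (1, 0, 0) x = x) ∧
    (∀ h₁ h₂ : ℂ × ℂ × ℂ, ‖h₁.1‖ ^ 2 - ‖h₁.2.1‖ ^ 2 = 1 → ‖h₂.1‖ ^ 2 - ‖h₂.2.1‖ ^ 2 = 1 →
      ∀ x : ℂ × ℂ, ‖x.2‖ < 1 → Jact (Jmul h₁ h₂) x = Jact h₁ (Jact h₂ x)) :=
  ⟨fun _ _ _ _ _ h hw => norm_div_conj_add_mul_conj_lt_one h hw,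
   fun x => by simp [Jact],
   fun _ _ _ h₂ _ hw => Jact_Jmul _ _ _ (conj_add_mul_conj_ne_zero h₂ hw)⟩
end
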